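/- arXiv:0903.1827 — 12 statements merged into one kernel-verified Lean document; each statement's English description precedes it below -/
import Mathlib

section
/- Let B be invertible 2×2 over ℂ, and X, Y 2×2 matrices with P₁(X,Y) = f₂(X)(YB+BX) − f₁(X)B² invertible. Define U = P₂(X,Y)·P₁(X,Y)⁻¹·B and V = B⁻¹(YB + BX − UB), where P₂(X,Y)=f₂(X)YX − f₀(X)B², f₂(X)=det B, f₁(X)=det(B)tr(XB⁻¹), f₀(X)=det X. Then UV = YX and UB + BV = YB + BX. -/
open Matrix

lemma ch2 (A : Matrix (Fin 2) (Fin 2) ℂ) :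
    A * A - A.trace • A + A.det • 1 = 0 := by
  ext i j
  fin_cases i <;> fin_cases j <;>
    simp [Matrix.mul_apply, Fin.sum_univ_two, Matrix.trace_fin_two,
      Matrix.det_fin_two, Matrix.one_apply] <;> ring

lemma key_det (B X Y : Matrix (Fin 2) (Fin 2) ℂ) :
    (B.det • (Y * X) - X.det • B ^ 2).det * B.det
      = X.det * (B.det • (Y * B + B * X) - (X * B.adjugate).trace • B ^ 2).det := by
  simp only [pow_two]
  simp [Matrix.det_fin_two, Matrix.trace_fin_two, Matrix.adjugate_fin_two,
    Matrix.mul_apply, Fin.sum_univ_two]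
  ring

lemma key_tr (B X Y : Matrix (Fin 2) (Fin 2) ℂ) :
    ((B.det • (Y * X) - X.det • B ^ 2) *
        (B.det • (Y * B + B * X) - (X * B.adjugate).trace • B ^ 2).adjugate).trace * B.det
      = (B.det • (Y * B + B * X) - (X * B.adjugate).trace • B ^ 2).det
          * (X * B.adjugate).trace := by
  simp only [pow_two]
  simp [Matrix.det_fin_two, Matrix.trace_fin_two, Matrix.adjugate_fin_two,
    Matrix.mul_apply, Fin.sum_univ_two]
  ring

theorem stmt_2 (B X Y : Matrix (Fin 2) (Fin 2) ℂ) (hB : IsUnit B.det)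
    (P₁ P₂ U V : Matrix (Fin 2) (Fin 2) ℂ)
    (hP1def : P₁ = B.det • (Y * B + B * X) - (B.det * (X * B⁻¹).trace) • B ^ 2)
    (hP2def : P₂ = B.det • (Y * X) - X.det • B ^ 2)
    (hP1 : IsUnit P₁.det)
    (hU : U = P₂ * P₁⁻¹ * B)
    (hV : V = B⁻¹ * (Y * B + B * X - U * B)) :
    U * V = Y * X ∧ U * B + B * V = Y * B + B * X := by
  have hd : B.det ≠ 0 := hB.ne_zero
  have hp : P₁.det ≠ 0 := hP1.ne_zero
  -- the coefficient rewrite: B.det * tr(X * B⁻¹) = tr(X * adjugate B)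
  have hc : B.det * (X * B⁻¹).trace = (X * B.adjugate).trace := by
    rw [Matrix.inv_def, Ring.inverse_eq_inv', mul_smul_comm, Matrix.trace_smul,
      smul_eq_mul]
    field_simp
  have hP1def' : P₁ = B.det • (Y * B + B * X) - (X * B.adjugate).trace • B ^ 2 := by
    rw [hP1def, hc]
  set W := P₂ * P₁⁻¹ with hW
  -- det fact
  have hdet : B.det * W.det = X.det := by
    have h1 : W.det = P₂.det * P₁.det⁻¹ := by
      rw [hW, Matrix.det_mul, Matrix.det_nonsing_inv, Ring.inverse_eq_inv']
    have h2 := key_det B X Y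
    rw [← hP2def, ← hP1def'] at h2
    rw [h1]
    field_simp
    linear_combination h2
  -- trace fact
  have htr : B.det * W.trace = (X * B.adjugate).trace := by
    have h1 : W.trace = P₁.det⁻¹ * (P₂ * P₁.adjugate).trace := by
      rw [hW, Matrix.inv_def, Ring.inverse_eq_inv', mul_smul_comm,
        Matrix.trace_smul, smul_eq_mul]
    have h2 := key_tr B X Y
    rw [← hP2def, ← hP1def'] at h2
    rw [h1]
    field_simp
    linear_combination h2
  -- Cayley-Hamilton scaled
  have hch : B.det • (W * W) = (X * B.adjugate).trace • W - X.det • 1 := by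
    have h0 := ch2 W
    have h1 : W * W = W.trace • W - W.det • 1 := by
      have := sub_eq_zero.mpr (congrArg id h0)
      linear_combination (norm := module) h0
    rw [h1, smul_sub, smul_smul, smul_smul, htr, hdet]
  -- the refactorization relation from W * P₁ = P₂
  have hWP : W * P₁ = P₂ := Matrix.nonsing_inv_mul_cancel_right P₁ P₂ hP1
  have hexp : B.det • (W * (Y * B + B * X)) - (X * B.adjugate).trace • (W * (B * B))
      = B.det • (Y * X) - X.det • (B * B) := by
    have h := hWP
    rw [hP1def', hP2def] at h
    simp only [Matrix.mul_sub, mul_smul_comm, pow_two] at h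
    exact h
  -- second conjunct
  have hBV : B * V = Y * B + B * X - U * B := by
    rw [hV, Matrix.mul_nonsing_inv_cancel_left _ _ hB]
  have conj2 : U * B + B * V = Y * B + B * X := by
    rw [hBV]; abel
  refine ⟨?_, conj2⟩
  -- first conjunct
  have hUV : U * V = W * (Y * B + B * X) - W * W * (B * B) := by
    rw [hV, hU]
    rw [Matrix.mul_assoc W B, Matrix.mul_nonsing_inv_cancel_left _ _ hB]
    noncomm_ring
  have key : B.det • (U * V) = B.det • (Y * X) := by
    rw [hUV, smul_sub]
    rw [show B.det • (W * W * (B * B)) = B.det • (W * W) * (B * B) from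
      (smul_mul_assoc _ _ _).symm, hch, sub_mul, smul_mul_assoc, smul_mul_assoc, one_mul]
    calc B.det • (W * (Y * B + B * X)) -
          ((X * B.adjugate).trace • (W * (B * B)) - X.det • (B * B))
        = (B.det • (W * (Y * B + B * X)) -
            (X * B.adjugate).trace • (W * (B * B))) + X.det • (B * B) := by abel
      _ = B.det • (Y * X) - X.det • (B * B) + X.det • (B * B) := by rw [hexp]
      _ = B.det • (Y * X) := by abel
  exact smul_right_injective _ hd key
end

section
/- With the hypotheses and definitions of the refactorization map (U = P₂(X,Y)P₁(X,Y)⁻¹B, V = B⁻¹(YB+BX−UB)), one has det(U − ζB) = det(X − ζB) and det(V − ζB) = det(Y − ζB) for all ζ ∈ ℂ. -/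
open Matrix

private lemma quadform (M N : Matrix (Fin 2) (Fin 2) ℂ) (z : ℂ) :
    (M - z • N).det = M.det - z * (M * N.adjugate).trace + z^2 * N.det := by
  simp [Matrix.det_fin_two, Matrix.adjugate_fin_two, Matrix.trace_fin_two, Matrix.mul_apply,
    Fin.sum_univ_two, Matrix.sub_apply, Matrix.smul_apply, smul_eq_mul]
  ring

private lemma chlike (U N : Matrix (Fin 2) (Fin 2) ℂ) :
    U * N.adjugate * U = (U * N.adjugate).trace • U - U.det • N := by
  ext i j
  fin_cases i <;> fin_cases j <;>
    · simp [Matrix.adjugate_fin_two, Matrix.trace_fin_two, Matrix.mul_apply, Fin.sum_univ_two,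
        Matrix.det_fin_two, Matrix.sub_apply, Matrix.smul_apply, smul_eq_mul]
      ring

private lemma expand2 (A C N : Matrix (Fin 2) (Fin 2) ℂ) (z : ℂ) :
    (A - z • N) * (C - z • N) = A * C - z • (A * N + N * C) + (z * z) • (N * N) := by
  simp only [sub_mul, mul_sub, mul_smul_comm, smul_mul_assoc, smul_smul, smul_add, smul_sub]
  abel

set_option maxHeartbeats 4000000 in
private lemma keyI1 (B X Y : Matrix (Fin 2) (Fin 2) ℂ) (hB : B.det ≠ 0) (ζ : ℂ)
    (P₁ P₂ : Matrix (Fin 2) (Fin 2) ℂ)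
    (hP1def : P₁ = B.det • (Y * B + B * X) - (B.det * (X * B⁻¹).trace) • B ^ 2)
    (hP2def : P₂ = B.det • (Y * X) - X.det • B ^ 2) :
    (P₂ - ζ • P₁).det * B.det = (X - ζ • B).det * P₁.det := by
  have hB' : B 0 0 * B 1 1 - B 0 1 * B 1 0 ≠ 0 := by rwa [Matrix.det_fin_two] at hB
  subst hP1def hP2def
  rw [Matrix.inv_def]
  simp only [Matrix.det_fin_two, Matrix.adjugate_fin_two, Matrix.trace_fin_two,
    Matrix.mul_apply, Fin.sum_univ_two, Matrix.smul_apply, Matrix.sub_apply, Matrix.add_apply,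
    Matrix.of_apply, Matrix.cons_val', Matrix.cons_val_zero, Matrix.cons_val_one,
    Matrix.head_cons, Matrix.head_fin_const, Matrix.empty_val', Matrix.cons_val_fin_one,
    pow_two, smul_eq_mul, Ring.inverse_eq_inv']
  field_simp
  ring

set_option maxHeartbeats 1000000 in
theorem stmt_3 (B X Y : Matrix (Fin 2) (Fin 2) ℂ) (hB : IsUnit B.det)
    (P₁ P₂ U V : Matrix (Fin 2) (Fin 2) ℂ)
    (hP1def : P₁ = B.det • (Y * B + B * X) - (B.det * (X * B⁻¹).trace) • B ^ 2)
    (hP2def : P₂ = B.det • (Y * X) - X.det • B ^ 2)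
    (hP1 : IsUnit P₁.det)
    (hU : U = P₂ * P₁⁻¹ * B)
    (hV : V = B⁻¹ * (Y * B + B * X - U * B)) :
    ∀ ζ : ℂ, (U - ζ • B).det = (X - ζ • B).det ∧ (V - ζ • B).det = (Y - ζ • B).det := by
  have hBd : B.det ≠ 0 := hB.ne_zero
  have hP1d : P₁.det ≠ 0 := hP1.ne_zero
  -- Goal 1
  have g1 : ∀ ζ : ℂ, (U - ζ • B).det = (X - ζ • B).det := by
    intro ζ
    have hfac : U - ζ • B = (P₂ - ζ • P₁) * (P₁⁻¹ * B) := by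
      rw [hU, sub_mul, smul_mul_assoc, ← Matrix.mul_assoc, ← Matrix.mul_assoc,
        Matrix.mul_nonsing_inv _ hP1, Matrix.one_mul]
    have key := keyI1 B X Y hBd ζ P₁ P₂ hP1def hP2def
    rw [hfac, Matrix.det_mul, Matrix.det_mul, Matrix.det_nonsing_inv, Ring.inverse_eq_inv']
    field_simp
    linear_combination key
  -- scalar consequences
  have hdU : U.det = X.det := by have h0 := g1 0; simpa using h0
  have hcU : (U * B.adjugate).trace = (X * B.adjugate).trace := by
    have h1 := g1 1
    rw [quadform U B 1, quadform X B 1] at h1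
    linear_combination hdU - h1
  -- crossX form of P₁
  have hsc : B.det * (X * B⁻¹).trace = (X * B.adjugate).trace := by
    rw [Matrix.inv_def, mul_smul_comm, Matrix.trace_smul, smul_eq_mul, Ring.inverse_eq_inv']
    field_simp
  have hP1c : P₁ = B.det • (Y * B + B * X) - ((X * B.adjugate).trace) • B ^ 2 := by
    rw [hP1def, hsc]
  have hUBi : U * B⁻¹ = P₂ * P₁⁻¹ := by
    rw [hU, Matrix.mul_assoc, Matrix.mul_nonsing_inv _ hB, Matrix.mul_one]
  have hMP : (P₂ * P₁⁻¹) * P₁ = P₂ := by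
    rw [Matrix.mul_assoc, Matrix.nonsing_inv_mul _ hP1, Matrix.mul_one]
  have hstar : B.det • ((U * B⁻¹) * (Y * B + B * X))
      = B.det • (Y * X) - X.det • B ^ 2 + ((X * B.adjugate).trace) • (U * B) := by
    set M := P₂ * P₁⁻¹ with hM
    have h := hMP
    rw [hP1c, mul_sub, mul_smul_comm, mul_smul_comm, hP2def] at h
    have hub : M * B ^ 2 = U * B := by
      rw [hU, pow_two, ← Matrix.mul_assoc]
    rw [hub, sub_eq_iff_eq_add] at h
    rw [hUBi, h]
  have hCH : B.det • (U * B⁻¹ * U) = ((X * B.adjugate).trace) • U - X.det • B := by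
    have h2 : U * B⁻¹ * U = (B.det)⁻¹ • (U * B.adjugate * U) := by
      rw [Matrix.inv_def, Ring.inverse_eq_inv', mul_smul_comm, smul_mul_assoc]
    rw [h2, smul_smul, mul_inv_cancel₀ hBd, one_smul, chlike, hcU, hdU]
  have hUV : U * V = Y * X := by
    have expand : U * V = (U * B⁻¹) * (Y * B + B * X) - (U * B⁻¹ * U) * B := by
      rw [hV]; noncomm_ring
    have hs : B.det • (U * V) = B.det • (Y * X) := by
      calc B.det • (U * V)
          = B.det • ((U * B⁻¹) * (Y * B + B * X)) - B.det • ((U * B⁻¹ * U) * B) := by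
            rw [expand, smul_sub]
        _ = (B.det • (Y * X) - X.det • B ^ 2 + ((X * B.adjugate).trace) • (U * B))
            - (((X * B.adjugate).trace) • U - X.det • B) * B := by
            have hCH' : B.det • (U * B⁻¹ * U * B)
                = (((X * B.adjugate).trace) • U - X.det • B) * B := by
              rw [← hCH, smul_mul_assoc]
            rw [hstar, hCH']
        _ = B.det • (Y * X) := by
            rw [sub_mul, smul_mul_assoc, smul_mul_assoc, ← pow_two]
            abel
    exact smul_right_injective _ hBd hs
  have hBV : B * V = Y * B + B * X - U * B := by
    rw [hV, ← Matrix.mul_assoc, Matrix.mul_nonsing_inv _ hB, Matrix.one_mul]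
  have hTT : U * B + B * V = Y * B + B * X := by rw [hBV]; abel
  have hprodM : ∀ ζ : ℂ, (U - ζ • B) * (V - ζ • B) = (Y - ζ • B) * (X - ζ • B) := by
    intro ζ
    rw [expand2, expand2, hUV, hTT]
  have key1 : ∀ ζ : ℂ,
      (X.det - ζ * (X * B.adjugate).trace + ζ^2 * B.det)
        * ((V.det - Y.det) - ζ * ((V * B.adjugate).trace - (Y * B.adjugate).trace)) = 0 := by
    intro ζ
    have h := congrArg Matrix.det (hprodM ζ)
    rw [Matrix.det_mul, Matrix.det_mul, g1 ζ] at h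
    rw [quadform X B ζ, quadform V B ζ, quadform Y B ζ] at h
    linear_combination h
  -- polynomial argument
  have hq : (Polynomial.C X.det - Polynomial.C ((X * B.adjugate).trace) * Polynomial.X
        + Polynomial.C B.det * Polynomial.X ^ 2)
      * (Polynomial.C (V.det - Y.det)
        - Polynomial.C ((V * B.adjugate).trace - (Y * B.adjugate).trace) * Polynomial.X)
      = 0 := by
    apply Polynomial.funext
    intro z
    simp only [Polynomial.eval_mul, Polynomial.eval_add, Polynomial.eval_sub,
      Polynomial.eval_pow, Polynomial.eval_C, Polynomial.eval_X, Polynomial.eval_zero]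
    linear_combination key1 z
  have hpne : (Polynomial.C X.det - Polynomial.C ((X * B.adjugate).trace) * Polynomial.X
        + Polynomial.C B.det * Polynomial.X ^ 2) ≠ 0 := by
    intro h
    apply hBd
    have h2 := congrArg (fun p => Polynomial.coeff p 2) h
    simpa [Polynomial.coeff_add, Polynomial.coeff_sub, Polynomial.coeff_C,
      Polynomial.coeff_C_mul, Polynomial.coeff_X_pow, Polynomial.coeff_X] using h2
  have hq0 : Polynomial.C (V.det - Y.det)
      - Polynomial.C ((V * B.adjugate).trace - (Y * B.adjugate).trace) * Polynomial.X = 0 := by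
    rcases mul_eq_zero.mp hq with h | h
    · exact absurd h hpne
    · exact h
  have ha : V.det - Y.det = 0 := by
    have h0 := congrArg (fun p => Polynomial.coeff p 0) hq0
    simpa [Polynomial.coeff_sub, Polynomial.coeff_C, Polynomial.coeff_C_mul,
      Polynomial.coeff_X] using h0
  have hb : (V * B.adjugate).trace - (Y * B.adjugate).trace = 0 := by
    have h1 := congrArg (fun p => Polynomial.coeff p 1) hq0
    simp at h1
    first
      | exact h1
      | exact sub_eq_zero.mpr h1
      | exact sub_eq_zero.mpr h1.symm
      | linear_combination h1
      | linear_combination -h1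
  intro ζ
  refine ⟨g1 ζ, ?_⟩
  rw [quadform V B ζ, quadform Y B ζ]
  linear_combination ha - ζ * hb
end

section
/- Suppose U, V, X, Y are 2×2 complex matrices and B is invertible such that UV = YX and UB + BV = YB + BX. Then UB⁻¹(Y − U) = (Y − U)XB⁻¹ and (X − V)B⁻¹V = B⁻¹Y(X − V). -/
open Matrix

theorem stmt_5 (B U V X Y : Matrix (Fin 2) (Fin 2) ℂ) (hB : IsUnit B.det)
    (h1 : U * V = Y * X) (h2 : U * B + B * V = Y * B + B * X) :
    U * B⁻¹ * (Y - U) = (Y - U) * (X * B⁻¹) ∧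
      (X - V) * (B⁻¹ * V) = B⁻¹ * Y * (X - V) := by
  have hBi : B * B⁻¹ = 1 := mul_nonsing_inv B hB
  have hiB : B⁻¹ * B = 1 := nonsing_inv_mul B hB
  have hk : (U - Y) * B = B * (X - V) := by
    rw [sub_mul, mul_sub, sub_eq_sub_iff_add_eq_add, add_comm (B * X)]
    exact h2
  have hk2 : B⁻¹ * (U - Y) = (X - V) * B⁻¹ := by
    calc B⁻¹ * (U - Y) = B⁻¹ * ((U - Y) * (B * B⁻¹)) := by rw [hBi, mul_one]
      _ = B⁻¹ * ((U - Y) * B) * B⁻¹ := by noncomm_ring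
      _ = B⁻¹ * B * (X - V) * B⁻¹ := by rw [hk]; noncomm_ring
      _ = (X - V) * B⁻¹ := by rw [hiB, one_mul]
  have hk3 : B⁻¹ * (Y - U) = (V - X) * B⁻¹ := by
    rw [← neg_sub U Y, ← neg_sub X V, mul_neg, neg_mul, hk2]
  constructor
  · calc U * B⁻¹ * (Y - U) = U * (B⁻¹ * (Y - U)) := by rw [mul_assoc]
      _ = U * ((V - X) * B⁻¹) := by rw [hk3]
      _ = (U * V - U * X) * B⁻¹ := by noncomm_ring
      _ = (Y * X - U * X) * B⁻¹ := by rw [h1]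
      _ = (Y - U) * (X * B⁻¹) := by noncomm_ring
  · calc (X - V) * (B⁻¹ * V) = (X - V) * B⁻¹ * V := by rw [mul_assoc]
      _ = B⁻¹ * (U - Y) * V := by rw [hk2]
      _ = B⁻¹ * (U * V - Y * V) := by noncomm_ring
      _ = B⁻¹ * (Y * X - Y * V) := by rw [h1]
      _ = B⁻¹ * Y * (X - V) := by noncomm_ring
end

section
/- If U, V, X, Y are 2×2 complex matrices, B invertible, satisfying UV = YX, UB + BV = YB + BX, and U − Y invertible, then V·B⁻¹ = (U−Y)⁻¹·Y·B⁻¹·(U−Y) and X·B⁻¹ = (Y−U)⁻¹·U·B⁻¹·(Y−U). -/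
open Matrix

theorem stmt_6 (B U V X Y : Matrix (Fin 2) (Fin 2) ℂ) (hB : IsUnit B.det)
    (h1 : U * V = Y * X) (h2 : U * B + B * V = Y * B + B * X)
    (hUY : IsUnit (U - Y).det) :
    V * B⁻¹ = (U - Y)⁻¹ * Y * B⁻¹ * (U - Y) ∧
      X * B⁻¹ = (Y - U)⁻¹ * U * B⁻¹ * (Y - U) := by
  have hBB : B⁻¹ * B = 1 := Matrix.nonsing_inv_mul B hB
  have hBB' : B * B⁻¹ = 1 := Matrix.mul_nonsing_inv B hB
  have hUYl : (U - Y)⁻¹ * (U - Y) = 1 := Matrix.nonsing_inv_mul _ hUY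
  have hne : Y - U = -(U - Y) := by abel
  have hYU : IsUnit (Y - U).det := by
    rw [hne, Matrix.det_neg]
    simpa using hUY
  have hYUl : (Y - U)⁻¹ * (Y - U) = 1 := Matrix.nonsing_inv_mul _ hYU
  -- key commutation
  have hk : (U - Y) * B = B * (X - V) := by
    rw [sub_mul, mul_sub, sub_eq_sub_iff_add_eq_add]
    exact h2.trans (add_comm _ _)
  have hXV : X - V = B⁻¹ * (U - Y) * B := by
    calc X - V = B⁻¹ * (B * (X - V)) := by rw [← mul_assoc, hBB, one_mul]
    _ = B⁻¹ * ((U - Y) * B) := by rw [← hk]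
    _ = B⁻¹ * (U - Y) * B := by rw [mul_assoc]
  constructor
  · have key : (U - Y) * (V * B⁻¹) = Y * B⁻¹ * (U - Y) := by
      calc (U - Y) * (V * B⁻¹) = ((U - Y) * V) * B⁻¹ := by rw [mul_assoc]
      _ = (Y * (X - V)) * B⁻¹ := by rw [sub_mul, mul_sub, h1]
      _ = (Y * (B⁻¹ * (U - Y) * B)) * B⁻¹ := by rw [hXV]
      _ = Y * B⁻¹ * (U - Y) * (B * B⁻¹) := by noncomm_ring
      _ = Y * B⁻¹ * (U - Y) := by rw [hBB', mul_one]
    calc V * B⁻¹ = (U - Y)⁻¹ * ((U - Y) * (V * B⁻¹)) := by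
          rw [← mul_assoc, hUYl, one_mul]
    _ = (U - Y)⁻¹ * (Y * B⁻¹ * (U - Y)) := by rw [key]
    _ = (U - Y)⁻¹ * Y * B⁻¹ * (U - Y) := by noncomm_ring
  · have key : (Y - U) * (X * B⁻¹) = U * B⁻¹ * (Y - U) := by
      calc (Y - U) * (X * B⁻¹) = ((Y - U) * X) * B⁻¹ := by rw [mul_assoc]
      _ = (U * (V - X)) * B⁻¹ := by rw [sub_mul, mul_sub, h1]
      _ = (U * (-(B⁻¹ * (U - Y) * B))) * B⁻¹ := by
            rw [show V - X = -(X - V) by abel, hXV]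
      _ = U * B⁻¹ * (Y - U) * (B * B⁻¹) := by rw [hne]; noncomm_ring
      _ = U * B⁻¹ * (Y - U) := by rw [hBB', mul_one]
    calc X * B⁻¹ = (Y - U)⁻¹ * ((Y - U) * (X * B⁻¹)) := by
          rw [← mul_assoc, hYUl, one_mul]
    _ = (Y - U)⁻¹ * (U * B⁻¹ * (Y - U)) := by rw [key]
    _ = (Y - U)⁻¹ * U * B⁻¹ * (Y - U) := by noncomm_ring
end

section
/- Let B be invertible 2×2 over ℂ. Suppose U, V satisfy (U−ζB)(V−ζB) = (Y−ζB)(X−ζB) for all ζ, det(U−ζB)=det(X−ζB) for all ζ, and P₁(X,Y) is invertible. Then U = P₂(X,Y)·P₁(X,Y)⁻¹·B, i.e. the solution with the same characteristic data as X is unique. -/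
open Matrix

/-- Cayley–Hamilton for 2×2 matrices, by direct computation. -/
lemma ch2' (M : Matrix (Fin 2) (Fin 2) ℂ) :
    M * M = M.trace • M - M.det • (1 : Matrix (Fin 2) (Fin 2) ℂ) := by
  ext i j
  fin_cases i <;> fin_cases j <;>
    simp [Matrix.mul_apply, Fin.sum_univ_two, Matrix.trace_fin_two, Matrix.det_fin_two,
      Matrix.one_apply] <;> ring

theorem stmt_7 (B X Y U V : Matrix (Fin 2) (Fin 2) ℂ) (hB : IsUnit B.det)
    (P₁ P₂ : Matrix (Fin 2) (Fin 2) ℂ)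
    (hP1def : P₁ = B.det • (Y * B + B * X) - (B.det * (X * B⁻¹).trace) • B ^ 2)
    (hP2def : P₂ = B.det • (Y * X) - X.det • B ^ 2)
    (hP1 : IsUnit P₁.det)
    (hfact : ∀ ζ : ℂ, (U - ζ • B) * (V - ζ • B) = (Y - ζ • B) * (X - ζ • B))
    (hdet : ∀ ζ : ℂ, (U - ζ • B).det = (X - ζ • B).det) :
    U = P₂ * P₁⁻¹ * B := by
  have hBne : B.det ≠ 0 := hB.ne_zero
  -- coefficient extraction from hfact
  have key1 : U * V = Y * X := by
    have e0 := hfact 0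
    simpa using e0
  have key2 : U * B + B * V = Y * B + B * X := by
    have e1 := hfact 1
    simp only [one_smul] at e1
    calc U * B + B * V = U * V + B * B - (U - B) * (V - B) := by noncomm_ring
      _ = Y * X + B * B - (Y - B) * (X - B) := by rw [e1, key1]
      _ = Y * B + B * X := by noncomm_ring
  -- coefficient extraction from hdet
  have dU : U.det = X.det := by
    have e0 := hdet 0
    simpa using e0
  have keytr : (U * B.adjugate).trace = (X * B.adjugate).trace := by
    have e1 := hdet 1
    have e2 := hdet (-1)
    simp only [one_smul, neg_smul, sub_neg_eq_add] at e1 e2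
    simp only [Matrix.det_fin_two, Matrix.sub_apply, Matrix.add_apply] at e1 e2
    simp only [Matrix.trace_fin_two, Matrix.mul_apply, Fin.sum_univ_two,
      Matrix.adjugate_fin_two, Matrix.of_apply, Matrix.cons_val', Matrix.cons_val_zero,
      Matrix.cons_val_one, Matrix.head_cons, Matrix.head_fin_const, Matrix.empty_val',
      Matrix.cons_val_fin_one]
    linear_combination (e2 - e1) / 2
  -- convert adjugate trace equality to inverse trace equality
  have hinvB : B⁻¹ = (B.det)⁻¹ • B.adjugate := by rw [inv_def, Ring.inverse_eq_inv']
  have keytr' : B.det * (U * B⁻¹).trace = B.det * (X * B⁻¹).trace := by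
    rw [hinvB, Matrix.mul_smul, Matrix.trace_smul, Matrix.mul_smul, Matrix.trace_smul]
    simp only [smul_eq_mul]
    field_simp
    linear_combination keytr
  -- main identity : U * B⁻¹ * P₁ = P₂
  have hBV : B * V = Y * B + B * X - U * B := by
    rw [← key2]; noncomm_ring
  have hcore : U * B⁻¹ * (Y * B + B * X) = Y * X + (U * B⁻¹) * (U * B⁻¹) * B ^ 2 := by
    have h1 : U * B⁻¹ * (B * V) = U * V := by
      rw [mul_assoc, ← mul_assoc B⁻¹ B V, nonsing_inv_mul B hB, one_mul]
    have h2 : (U * B⁻¹) * (U * B⁻¹) * B ^ 2 = U * B⁻¹ * (U * B) := by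
      rw [pow_two]
      calc (U * B⁻¹) * (U * B⁻¹) * (B * B)
          = U * B⁻¹ * (U * (B⁻¹ * B) * B) := by noncomm_ring
        _ = U * B⁻¹ * (U * B) := by rw [nonsing_inv_mul B hB, mul_one]
    rw [h2]
    calc U * B⁻¹ * (Y * B + B * X)
        = U * B⁻¹ * (B * V) + U * B⁻¹ * (U * B) := by rw [hBV]; noncomm_ring
      _ = Y * X + U * B⁻¹ * (U * B) := by rw [h1, key1]
  have hdetM : (U * B⁻¹).det = X.det * (B.det)⁻¹ := by
    rw [Matrix.det_mul, det_nonsing_inv, Ring.inverse_eq_inv', dU]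
  have main : U * B⁻¹ * P₁ = P₂ := by
    rw [hP1def, hP2def]
    rw [Matrix.mul_sub, Matrix.mul_smul, Matrix.mul_smul, hcore]
    have hUB2 : U * B⁻¹ * B ^ 2 = U * B := by
      rw [pow_two, ← mul_assoc, nonsing_inv_mul_cancel_right B U hB]
    rw [hUB2]
    rw [ch2' (U * B⁻¹)]
    have htr2 : (U * B⁻¹).trace • (U * B⁻¹) * B ^ 2 = (U * B⁻¹).trace • (U * B) := by
      rw [smul_mul_assoc, pow_two, ← mul_assoc, nonsing_inv_mul_cancel_right B U hB]
    rw [sub_mul, htr2, smul_mul_assoc, one_mul, hdetM]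
    rw [smul_add, smul_sub, smul_smul, smul_smul, keytr']
    have : B.det * (X.det * B.det⁻¹) = X.det := by field_simp
    rw [this]
    module
  -- conclude
  have : P₂ * P₁⁻¹ * B = U := by
    rw [← main, mul_nonsing_inv_cancel_right P₁ (U * B⁻¹) hP1,
      nonsing_inv_mul_cancel_right B U hB]
  exact this.symm
end

section
/- Uniqueness in the cubic refactorization: let B be invertible 2×2 over ℂ and X, Y, Z, X' 2×2 matrices such that (X'−ζB)(Y'−ζB)(Z'−ζB) = (X−ζB)(Y−ζB)(Z−ζB) for all ζ for some Y', Z', with det(X'−ζB)=det(X−ζB) for all ζ, and with f₂(X)²L − f₂(X)f₁(X)M + (f₁(X)²−f₂(X)f₀(X))B³ invertible, where L = XYB+XBZ+BYZ, M = XB²+BYB+B²Z. Then X' = X. -/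
open Matrix

private lemma adj2 (A : Matrix (Fin 2) (Fin 2) ℂ) : A.adjugate = A.trace • 1 - A := by
  ext i j
  fin_cases i <;> fin_cases j <;> simp [Matrix.adjugate_fin_two, Matrix.trace_fin_two]

private lemma det2 (B W : Matrix (Fin 2) (Fin 2) ℂ) (ζ : ℂ) :
    (W - ζ • B).det = B.det * ζ ^ 2 - (W * B.adjugate).trace * ζ + W.det := by
  simp [Matrix.det_fin_two, Matrix.adjugate_fin_two, Matrix.trace_fin_two, Matrix.mul_apply,
    Fin.sum_univ_two]
  ring

theorem stmt_8 (B X Y Z X' Y' Z' : Matrix (Fin 2) (Fin 2) ℂ) (hB : IsUnit B.det)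
    (hfact : ∀ ζ : ℂ,
      (X' - ζ • B) * (Y' - ζ • B) * (Z' - ζ • B) =
        (X - ζ • B) * (Y - ζ • B) * (Z - ζ • B))
    (hdet : ∀ ζ : ℂ, (X' - ζ • B).det = (X - ζ • B).det)
    (hinv : IsUnit
      ((B.det ^ 2) • (X * Y * B + X * B * Z + B * Y * Z) -
        (B.det * (B.det * (X * B⁻¹).trace)) • (X * B ^ 2 + B * Y * B + B ^ 2 * Z) +
        ((B.det * (X * B⁻¹).trace) ^ 2 - B.det * X.det) • B ^ 3).det) :
    X' = X := by
  have hf1 : B.det * (X * B⁻¹).trace = (X * B.adjugate).trace := by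
    rw [Matrix.inv_def, Matrix.mul_smul, Matrix.trace_smul, smul_eq_mul, ← mul_assoc,
      Ring.mul_inverse_cancel _ hB, one_mul]
  rw [hf1] at hinv
  set f₂ : ℂ := B.det with hf₂def
  set f₁ : ℂ := (X * B.adjugate).trace with hf₁def
  set f₀ : ℂ := X.det with hf₀def
  set E : Matrix (Fin 2) (Fin 2) ℂ := (X'.trace - X.trace) • 1 - (X' - X) with hE
  -- key functional identity
  have key : ∀ ζ : ℂ, E * ((X - ζ • B) * (Y - ζ • B) * (Z - ζ • B)) =
      (f₂ * ζ ^ 2 - f₁ * ζ + f₀) •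
        ((Y' - ζ • B) * (Z' - ζ • B) - (Y - ζ • B) * (Z - ζ • B)) := by
    intro ζ
    have h1 : (X' - ζ • B).adjugate * ((X - ζ • B) * (Y - ζ • B) * (Z - ζ • B)) =
        (X - ζ • B).det • ((Y' - ζ • B) * (Z' - ζ • B)) := by
      rw [← hfact ζ, ← hdet ζ, ← Matrix.mul_assoc, ← Matrix.mul_assoc, Matrix.adjugate_mul,
        Matrix.smul_mul, Matrix.smul_mul, Matrix.one_mul]
    have h2 : (X - ζ • B).adjugate * ((X - ζ • B) * (Y - ζ • B) * (Z - ζ • B)) =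
        (X - ζ • B).det • ((Y - ζ • B) * (Z - ζ • B)) := by
      rw [← Matrix.mul_assoc, ← Matrix.mul_assoc, Matrix.adjugate_mul,
        Matrix.smul_mul, Matrix.smul_mul, Matrix.one_mul]
    have hEadj : (X' - ζ • B).adjugate - (X - ζ • B).adjugate = E := by
      rw [adj2, adj2, hE, Matrix.trace_sub, Matrix.trace_sub, Matrix.trace_smul]
      module
    calc E * ((X - ζ • B) * (Y - ζ • B) * (Z - ζ • B))
        = ((X' - ζ • B).adjugate - (X - ζ • B).adjugate) *
            ((X - ζ • B) * (Y - ζ • B) * (Z - ζ • B)) := by rw [hEadj]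
      _ = (X' - ζ • B).adjugate * ((X - ζ • B) * (Y - ζ • B) * (Z - ζ • B)) -
            (X - ζ • B).adjugate * ((X - ζ • B) * (Y - ζ • B) * (Z - ζ • B)) :=
          Matrix.sub_mul _ _ _
      _ = (X - ζ • B).det • ((Y' - ζ • B) * (Z' - ζ • B)) -
            (X - ζ • B).det • ((Y - ζ • B) * (Z - ζ • B)) := by rw [h1, h2]
      _ = (X - ζ • B).det • ((Y' - ζ • B) * (Z' - ζ • B) - (Y - ζ • B) * (Z - ζ • B)) :=
          (smul_sub _ _ _).symm
      _ = (f₂ * ζ ^ 2 - f₁ * ζ + f₀) •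
            ((Y' - ζ • B) * (Z' - ζ • B) - (Y - ζ • B) * (Z - ζ • B)) := by
          rw [det2]
  -- expand as a cubic in ζ
  have hexp : ∀ ζ : ℂ,
      (E * (X * Y * Z) - f₀ • (Y' * Z' - Y * Z)) +
      ζ • (f₁ • (Y' * Z' - Y * Z) - f₀ • ((Y * B + B * Z) - (Y' * B + B * Z')) -
            E * (X * Y * B + X * B * Z + B * Y * Z)) +
      ζ ^ 2 • (E * (X * B ^ 2 + B * Y * B + B ^ 2 * Z) - f₂ • (Y' * Z' - Y * Z) +
            f₁ • ((Y * B + B * Z) - (Y' * B + B * Z'))) +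
      ζ ^ 3 • (-(E * (B ^ 3)) - f₂ • ((Y * B + B * Z) - (Y' * B + B * Z'))) = 0 := by
    intro ζ
    have h := key ζ
    rw [show (B : Matrix (Fin 2) (Fin 2) ℂ) ^ 3 = B * B * B by rw [pow_succ, pow_two],
      show (B : Matrix (Fin 2) (Fin 2) ℂ) ^ 2 = B * B from pow_two B]
    ext i j
    have h' := congrFun (congrFun h i) j
    simp only [Matrix.mul_apply, Matrix.sub_apply, Matrix.add_apply, Matrix.smul_apply,
      Matrix.neg_apply, Matrix.zero_apply, Fin.sum_univ_two, smul_eq_mul] at h' ⊢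
    linear_combination h'
  have h0 := hexp 0
  have h1 := hexp 1
  have hm := hexp (-1)
  have h2 := hexp 2
  have hA1 : E * (X * Y * B + X * B * Z + B * Y * Z) =
      f₁ • (Y' * Z' - Y * Z) - f₀ • ((Y * B + B * Z) - (Y' * B + B * Z')) := by
    linear_combination (norm := module) (-1 : ℂ) • h1 + (1/3 : ℂ) • hm + (1/6 : ℂ) • h2 +
      (1/2 : ℂ) • h0
  have hA2 : E * (X * B ^ 2 + B * Y * B + B ^ 2 * Z) =
      f₂ • (Y' * Z' - Y * Z) - f₁ • ((Y * B + B * Z) - (Y' * B + B * Z')) := by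
    linear_combination (norm := module) (1/2 : ℂ) • h1 + (1/2 : ℂ) • hm - (1 : ℂ) • h0
  have hA3 : E * (B ^ 3) = -(f₂ • ((Y * B + B * Z) - (Y' * B + B * Z'))) := by
    linear_combination (norm := module) (-1/6 : ℂ) • h2 + (1/2 : ℂ) • h1 + (1/6 : ℂ) • hm -
      (1/2 : ℂ) • h0
  set K : Matrix (Fin 2) (Fin 2) ℂ :=
    f₂ ^ 2 • (X * Y * B + X * B * Z + B * Y * Z) -
      (f₂ * f₁) • (X * B ^ 2 + B * Y * B + B ^ 2 * Z) + (f₁ ^ 2 - f₂ * f₀) • B ^ 3 with hK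
  have hEK : E * K = 0 := by
    rw [hK, Matrix.mul_add, Matrix.mul_sub, mul_smul_comm, mul_smul_comm, mul_smul_comm,
      hA1, hA2, hA3]
    module
  have hE0 : E = 0 := by
    calc E = E * (K * K⁻¹) := by rw [Matrix.mul_nonsing_inv K hinv, Matrix.mul_one]
      _ = (E * K) * K⁻¹ := by rw [Matrix.mul_assoc]
      _ = 0 := by rw [hEK, Matrix.zero_mul]
  have ht : X'.trace - X.trace = 0 := by
    have h := congrArg Matrix.trace hE0
    rw [hE] at h
    simp only [Matrix.trace_sub, Matrix.trace_smul, Matrix.trace_one, Matrix.trace_zero,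
      smul_eq_mul] at h
    norm_num at h
    linear_combination h
  rw [hE, ht, zero_smul, zero_sub, neg_eq_zero, sub_eq_zero] at hE0
  exact hE0
end

section
/- Suppose a map A(·;·) with spectral parameter satisfies: A(u;α)A(v;β) = A(y;β)A(x;α) whenever (u,v)=R_{α,β}(x,y), and the equation A(x̂;α)A(ŷ;β)A(ẑ;γ) = A(x;α)A(y;β)A(z;γ) implies x̂=x, ŷ=y, ẑ=z. Then R satisfies the parametric Yang–Baxter equation R²³R¹³R¹² = R¹²R¹³R²³. -/
open Matrix

/-- Action of a parametric map on factors 1,2 of a triple. -/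
def R12 {X P : Type*} (R : P → P → X × X → X × X) (α β : P) (t : X × X × X) : X × X × X :=
  ((R α β (t.1, t.2.1)).1, (R α β (t.1, t.2.1)).2, t.2.2)

/-- Action on factors 1,3. -/
def R13 {X P : Type*} (R : P → P → X × X → X × X) (α γ : P) (t : X × X × X) : X × X × X :=
  ((R α γ (t.1, t.2.2)).1, t.2.1, (R α γ (t.1, t.2.2)).2)

/-- Action on factors 2,3. -/
def R23 {X P : Type*} (R : P → P → X × X → X × X) (β γ : P) (t : X × X × X) : X × X × X :=
  (t.1, (R β γ (t.2.1, t.2.2)).1, (R β γ (t.2.1, t.2.2)).2)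

theorem stmt_11 {X P : Type*} (R : P → P → X × X → X × X)
    (A : X → P → ℂ → Matrix (Fin 2) (Fin 2) ℂ)
    (hLax : ∀ (α β : P) (x y : X) (ζ : ℂ),
      A (R α β (x, y)).1 α ζ * A (R α β (x, y)).2 β ζ = A y β ζ * A x α ζ)
    (hUniq : ∀ (α β γ : P) (x y z x' y' z' : X),
      (∀ ζ : ℂ, A x' α ζ * A y' β ζ * A z' γ ζ = A x α ζ * A y β ζ * A z γ ζ) →
        x' = x ∧ y' = y ∧ z' = z) :
    ∀ (α β γ : P) (t : X × X × X),
      R23 R β γ (R13 R α γ (R12 R α β t)) = R12 R α β (R13 R α γ (R23 R β γ t)) := by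

  intro α β γ t
  obtain ⟨x, y, z⟩ := t
  rcases ha : R α β (x, y) with ⟨x1, y1⟩
  rcases hb : R α γ (x1, z) with ⟨x2, z1⟩
  rcases hc : R β γ (y1, z1) with ⟨y2, z2⟩
  rcases hd : R β γ (y, z) with ⟨y1', z1'⟩
  rcases he : R α γ (x, z1') with ⟨x1', z2'⟩
  rcases hf : R α β (x1', y1') with ⟨x2', y2'⟩
  have e1 : ∀ ζ, A x1 α ζ * A y1 β ζ = A y β ζ * A x α ζ := fun ζ => by
    have h := hLax α β x y ζ; rw [ha] at h; exact h
  have e2 : ∀ ζ, A x2 α ζ * A z1 γ ζ = A z γ ζ * A x1 α ζ := fun ζ => by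
    have h := hLax α γ x1 z ζ; rw [hb] at h; exact h
  have e3 : ∀ ζ, A y2 β ζ * A z2 γ ζ = A z1 γ ζ * A y1 β ζ := fun ζ => by
    have h := hLax β γ y1 z1 ζ; rw [hc] at h; exact h
  have e4 : ∀ ζ, A y1' β ζ * A z1' γ ζ = A z γ ζ * A y β ζ := fun ζ => by
    have h := hLax β γ y z ζ; rw [hd] at h; exact h
  have e5 : ∀ ζ, A x1' α ζ * A z2' γ ζ = A z1' γ ζ * A x α ζ := fun ζ => by
    have h := hLax α γ x z1' ζ; rw [he] at h; exact h
  have e6 : ∀ ζ, A x2' α ζ * A y2' β ζ = A y1' β ζ * A x1' α ζ := fun ζ => by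
    have h := hLax α β x1' y1' ζ; rw [hf] at h; exact h
  have left : ∀ ζ, A x2 α ζ * A y2 β ζ * A z2 γ ζ = A z γ ζ * A y β ζ * A x α ζ := by
    intro ζ
    calc A x2 α ζ * A y2 β ζ * A z2 γ ζ
        = A x2 α ζ * (A y2 β ζ * A z2 γ ζ) := mul_assoc _ _ _
      _ = A x2 α ζ * (A z1 γ ζ * A y1 β ζ) := by rw [e3 ζ]
      _ = A x2 α ζ * A z1 γ ζ * A y1 β ζ := (mul_assoc _ _ _).symm
      _ = A z γ ζ * A x1 α ζ * A y1 β ζ := by rw [e2 ζ]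
      _ = A z γ ζ * (A x1 α ζ * A y1 β ζ) := mul_assoc _ _ _
      _ = A z γ ζ * (A y β ζ * A x α ζ) := by rw [e1 ζ]
      _ = A z γ ζ * A y β ζ * A x α ζ := (mul_assoc _ _ _).symm
  have right : ∀ ζ, A x2' α ζ * A y2' β ζ * A z2' γ ζ = A z γ ζ * A y β ζ * A x α ζ := by
    intro ζ
    calc A x2' α ζ * A y2' β ζ * A z2' γ ζ
        = A y1' β ζ * A x1' α ζ * A z2' γ ζ := by rw [e6 ζ]
      _ = A y1' β ζ * (A x1' α ζ * A z2' γ ζ) := mul_assoc _ _ _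
      _ = A y1' β ζ * (A z1' γ ζ * A x α ζ) := by rw [e5 ζ]
      _ = A y1' β ζ * A z1' γ ζ * A x α ζ := (mul_assoc _ _ _).symm
      _ = A z γ ζ * A y β ζ * A x α ζ := by rw [e4 ζ]
  obtain ⟨hx, hy, hz⟩ := hUniq α β γ x2' y2' z2' x2 y2 z2
    (fun ζ => (left ζ).trans (right ζ).symm)
  simp only [R12, R13, R23, ha, hb, hc, hd, he, hf]
  exact Prod.ext hx (Prod.ext hy hz)
end

section
/- The Adler–Yamilov map R_{α,β}((x₁,x₂),(y₁,y₂)) = ((y₁ − (α−β)x₁/(1+x₁y₂), y₂), (x₁, x₂ + (α−β)y₂/(1+x₁y₂))) satisfies the parametric Yang–Baxter equation R²³R¹³R¹² = R¹²R¹³R²³ (wherever defined). -/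
/-!
Let D₁, D₂, D₃ be the denominators `1 + a * b` met by R¹², R¹³, R²³ on the left-hand side and
E₁, E₂, E₃ those met by R²³, R¹³, R¹² on the right. With P = (1 + x₁y₂)(1 + y₁z₂), the denominators
pair up as D₁D₂ = E₂E₃ = P - (α - β)x₁z₂ and D₂D₃ = E₁E₂ = P + (β - γ)x₁z₂. After this substitution
both sides take the same closed form `ayYBValue`: the coordinates carrying both products agree
because P + c x₁z₂ is affine in c, so that
(α - β)(P + (β - γ)x₁z₂) + (β - γ)(P - (α - β)x₁z₂) = (α - γ)P.
-/

/-- The Adler–Yamilov parametric map on ℂ² × ℂ². -/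
noncomputable def AY (α β : ℂ) (p : (ℂ × ℂ) × (ℂ × ℂ)) : (ℂ × ℂ) × (ℂ × ℂ) :=
  ((p.2.1 - (α - β) * p.1.1 / (1 + p.1.1 * p.2.2), p.2.2),
   (p.1.1, p.1.2 + (α - β) * p.2.2 / (1 + p.1.1 * p.2.2)))

/-- Action on factors 1,2 of a triple. -/
noncomputable def ayR12 (α β : ℂ) (t : (ℂ × ℂ) × (ℂ × ℂ) × (ℂ × ℂ)) : (ℂ × ℂ) × (ℂ × ℂ) × (ℂ × ℂ) :=
  ((AY α β (t.1, t.2.1)).1, (AY α β (t.1, t.2.1)).2, t.2.2)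

/-- Action on factors 1,3. -/
noncomputable def ayR13 (α γ : ℂ) (t : (ℂ × ℂ) × (ℂ × ℂ) × (ℂ × ℂ)) : (ℂ × ℂ) × (ℂ × ℂ) × (ℂ × ℂ) :=
  ((AY α γ (t.1, t.2.2)).1, t.2.1, (AY α γ (t.1, t.2.2)).2)

/-- Action on factors 2,3. -/
noncomputable def ayR23 (β γ : ℂ) (t : (ℂ × ℂ) × (ℂ × ℂ) × (ℂ × ℂ)) : (ℂ × ℂ) × (ℂ × ℂ) × (ℂ × ℂ) :=
  (t.1, (AY β γ (t.2.1, t.2.2)).1, (AY β γ (t.2.1, t.2.2)).2)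

noncomputable def ayYBDenom (c : ℂ) (t : (ℂ × ℂ) × (ℂ × ℂ) × (ℂ × ℂ)) : ℂ :=
  (1 + t.1.1 * t.2.1.2) * (1 + t.2.1.1 * t.2.2.2) + c * t.1.1 * t.2.2.2

noncomputable def ayYBValue (α β γ : ℂ) (t : (ℂ × ℂ) × (ℂ × ℂ) × (ℂ × ℂ)) :
    (ℂ × ℂ) × (ℂ × ℂ) × (ℂ × ℂ) :=
  let x := t.1; let y := t.2.1; let z := t.2.2
  ((z.1 - (α - γ) * (y.1 * (1 + x.1 * y.2) - (α - β) * x.1) / ayYBDenom (β - α) t, z.2),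
   (y.1 - (α - γ) * x.1 * (1 + y.1 * z.2) / ayYBDenom (β - γ) t,
     y.2 + (α - γ) * z.2 * (1 + x.1 * y.2) / ayYBDenom (β - α) t),
   (x.1, x.2 + (α - γ) * (y.2 * (1 + y.1 * z.2) + (β - γ) * z.2) / ayYBDenom (β - γ) t))

section

variable (α β γ : ℂ) {t : (ℂ × ℂ) × (ℂ × ℂ) × (ℂ × ℂ)}

theorem one_add_ayR12_mul_eq_div (h₁ : 1 + t.1.1 * t.2.1.2 ≠ 0) :
    1 + (ayR12 α β t).1.1 * (ayR12 α β t).2.2.2 =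
      ayYBDenom (β - α) t / (1 + t.1.1 * t.2.1.2) := by
  simp only [ayR12, AY, ayYBDenom]
  grind

theorem one_add_ayR13_ayR12_mul_eq_div (h₁ : 1 + t.1.1 * t.2.1.2 ≠ 0)
    (h₂ : 1 + (ayR12 α β t).1.1 * (ayR12 α β t).2.2.2 ≠ 0) :
    1 + (ayR13 α γ (ayR12 α β t)).2.1.1 * (ayR13 α γ (ayR12 α β t)).2.2.2 =
      ayYBDenom (β - γ) t / (1 + (ayR12 α β t).1.1 * (ayR12 α β t).2.2.2) := by
  rw [eq_div_iff h₂]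
  simp only [ayR12, ayR13, AY, ayYBDenom] at h₂ ⊢
  grind

theorem one_add_ayR23_mul_eq_div (h₁ : 1 + t.2.1.1 * t.2.2.2 ≠ 0) :
    1 + (ayR23 β γ t).1.1 * (ayR23 β γ t).2.2.2 =
      ayYBDenom (β - γ) t / (1 + t.2.1.1 * t.2.2.2) := by
  simp only [ayR23, AY, ayYBDenom]
  grind

theorem one_add_ayR13_ayR23_mul_eq_div (h₁ : 1 + t.2.1.1 * t.2.2.2 ≠ 0)
    (h₂ : 1 + (ayR23 β γ t).1.1 * (ayR23 β γ t).2.2.2 ≠ 0) :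
    1 + (ayR13 α γ (ayR23 β γ t)).1.1 * (ayR13 α γ (ayR23 β γ t)).2.1.2 =
      ayYBDenom (β - α) t / (1 + (ayR23 β γ t).1.1 * (ayR23 β γ t).2.2.2) := by
  rw [eq_div_iff h₂]
  simp only [ayR23, ayR13, AY, ayYBDenom] at h₂ ⊢
  grind

theorem ayR23_ayR13_ayR12_eq_ayYBValue (h₁ : 1 + t.1.1 * t.2.1.2 ≠ 0)
    (h₂ : 1 + (ayR12 α β t).1.1 * (ayR12 α β t).2.2.2 ≠ 0)
    (h₃ : 1 + (ayR13 α γ (ayR12 α β t)).2.1.1 * (ayR13 α γ (ayR12 α β t)).2.2.2 ≠ 0) :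
    ayR23 β γ (ayR13 α γ (ayR12 α β t)) = ayYBValue α β γ t := by
  have hD₂ := one_add_ayR12_mul_eq_div α β h₁
  have hD₃ := one_add_ayR13_ayR12_mul_eq_div α β γ h₁ h₂
  have hM : ayYBDenom (β - α) t ≠ 0 := by
    rw [hD₂] at h₂
    exact (div_ne_zero_iff.mp h₂).1
  have hN : ayYBDenom (β - γ) t ≠ 0 := by
    rw [hD₃] at h₃
    exact (div_ne_zero_iff.mp h₃).1
  simp only [ayR12, ayR13, ayR23, AY] at hD₂ hD₃ ⊢
  rw [hD₃, hD₂]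
  simp only [ayYBValue, Prod.mk.injEq]
  -- `field_simp` would reorder the factors of `1 + x₁ * y₂` and then fail to match `h₁`.
  generalize hD : 1 + t.1.1 * t.2.1.2 = D at h₁ ⊢
  refine ⟨⟨?_, trivial⟩, ⟨?_, ?_⟩, trivial, ?_⟩ <;> field_simp <;> subst hD <;>
    simp only [ayYBDenom] <;> ring

theorem ayR12_ayR13_ayR23_eq_ayYBValue (h₁ : 1 + t.2.1.1 * t.2.2.2 ≠ 0)
    (h₂ : 1 + (ayR23 β γ t).1.1 * (ayR23 β γ t).2.2.2 ≠ 0)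
    (h₃ : 1 + (ayR13 α γ (ayR23 β γ t)).1.1 * (ayR13 α γ (ayR23 β γ t)).2.1.2 ≠ 0) :
    ayR12 α β (ayR13 α γ (ayR23 β γ t)) = ayYBValue α β γ t := by
  have hE₂ := one_add_ayR23_mul_eq_div β γ h₁
  have hE₃ := one_add_ayR13_ayR23_mul_eq_div α β γ h₁ h₂
  have hN : ayYBDenom (β - γ) t ≠ 0 := by
    rw [hE₂] at h₂
    exact (div_ne_zero_iff.mp h₂).1
  have hM : ayYBDenom (β - α) t ≠ 0 := by
    rw [hE₃] at h₃
    exact (div_ne_zero_iff.mp h₃).1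
  simp only [ayR12, ayR13, ayR23, AY] at hE₂ hE₃ ⊢
  rw [hE₃, hE₂]
  simp only [ayYBValue, Prod.mk.injEq]
  -- `field_simp` would reorder the factors of `1 + y₁ * z₂` and then fail to match `h₁`.
  generalize hE : 1 + t.2.1.1 * t.2.2.2 = E at h₁ ⊢
  refine ⟨⟨?_, trivial⟩, ⟨?_, ?_⟩, trivial, ?_⟩ <;> field_simp <;> subst hE <;>
    simp only [ayYBDenom] <;> ring

end

theorem stmt_12 (α β γ : ℂ) (t : (ℂ × ℂ) × (ℂ × ℂ) × (ℂ × ℂ))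
    (hL1 : 1 + t.1.1 * t.2.1.2 ≠ 0)
    (hL2 : 1 + (ayR12 α β t).1.1 * (ayR12 α β t).2.2.2 ≠ 0)
    (hL3 : 1 + (ayR13 α γ (ayR12 α β t)).2.1.1 * (ayR13 α γ (ayR12 α β t)).2.2.2 ≠ 0)
    (hR1 : 1 + t.2.1.1 * t.2.2.2 ≠ 0)
    (hR2 : 1 + (ayR23 β γ t).1.1 * (ayR23 β γ t).2.2.2 ≠ 0)
    (hR3 : 1 + (ayR13 α γ (ayR23 β γ t)).1.1 * (ayR13 α γ (ayR23 β γ t)).2.1.2 ≠ 0) :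
    ayR23 β γ (ayR13 α γ (ayR12 α β t)) = ayR12 α β (ayR13 α γ (ayR23 β γ t)) :=
  (ayR23_ayR13_ayR12_eq_ayYBValue α β γ hL1 hL2 hL3).trans
    (ayR12_ayR13_ayR23_eq_ayYBValue α β γ hR1 hR2 hR3).symm
end

section
/- The map R_{α,β}((x₁,x₂),(y₁,y₂)) = ((y₁ + (α−β)/(x₁+y₂), y₂), (x₁, x₂ − (α−β)/(x₁+y₂))) satisfies the parametric Yang–Baxter equation R²³R¹³R¹² = R¹²R¹³R²³ (wherever defined). -/
/-- The KdV-lift parametric Yang--Baxter map on ℂ² × ℂ². -/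
noncomputable def KdVMap (α β : ℂ) (p : (ℂ × ℂ) × (ℂ × ℂ)) : (ℂ × ℂ) × (ℂ × ℂ) :=
  ((p.2.1 + (α - β) / (p.1.1 + p.2.2), p.2.2),
   (p.1.1, p.1.2 - (α - β) / (p.1.1 + p.2.2)))

/-- Action on factors 1,2 of a triple. -/
noncomputable def kdvR12 (α β : ℂ) (t : (ℂ × ℂ) × (ℂ × ℂ) × (ℂ × ℂ)) :
    (ℂ × ℂ) × (ℂ × ℂ) × (ℂ × ℂ) :=
  ((KdVMap α β (t.1, t.2.1)).1, (KdVMap α β (t.1, t.2.1)).2, t.2.2)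

/-- Action on factors 1,3. -/
noncomputable def kdvR13 (α γ : ℂ) (t : (ℂ × ℂ) × (ℂ × ℂ) × (ℂ × ℂ)) :
    (ℂ × ℂ) × (ℂ × ℂ) × (ℂ × ℂ) :=
  ((KdVMap α γ (t.1, t.2.2)).1, t.2.1, (KdVMap α γ (t.1, t.2.2)).2)

/-- Action on factors 2,3. -/
noncomputable def kdvR23 (β γ : ℂ) (t : (ℂ × ℂ) × (ℂ × ℂ) × (ℂ × ℂ)) :
    (ℂ × ℂ) × (ℂ × ℂ) × (ℂ × ℂ) :=
  (t.1, (KdVMap β γ (t.2.1, t.2.2)).1, (KdVMap β γ (t.2.1, t.2.2)).2)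

/-!
Write `t = (x, y, z)`, `a = x₁ + y₂`, `b = y₁ + z₂`, `D = ab + α - β` and `E = ab + γ - β`.
Composing the three maps in either order gives `(z, y, x)` with `z₁` shifted by some `u`,
`y` by `(w, -u)` and `x₂` by `-w`. On the left `u = (α - γ) a / D`, on the right
`w = (α - γ) b / E`, and the other two shifts are expressed through these by the same identity
`(α - β) E + (β - γ) D = (α - γ) a b`.
-/

def reverseShift (t : (ℂ × ℂ) × (ℂ × ℂ) × (ℂ × ℂ)) (u w : ℂ) :
    (ℂ × ℂ) × (ℂ × ℂ) × (ℂ × ℂ) :=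
  ((t.2.2.1 + u, t.2.2.2), (t.2.1.1 + w, t.2.1.2 - u), (t.1.1, t.1.2 - w))

section ShiftIdentities

variable {K : Type*} [Field K] (α β γ a b : K)

theorem kdv_shift_identity :
    (α - β) * (a * b + (γ - β)) + (β - γ) * (a * b + (α - β)) = (α - γ) * (a * b) := by
  ring

variable {α β γ a b}

theorem kdv_left_shift_eq (hb : b ≠ 0) (hD : a * b + (α - β) ≠ 0) :
    (α - γ) * a / (a * b + (α - β))
      = (β - γ) / b + (α - β) * (a * b + (γ - β)) / (b * (a * b + (α - β))) := by
  field_simp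
  linear_combination kdv_shift_identity α β γ a b

theorem kdv_right_shift_eq (ha : a ≠ 0) (hE : a * b + (γ - β) ≠ 0) :
    (α - β) / a + (β - γ) * (a * b + (α - β)) / (a * (a * b + (γ - β)))
      = (α - γ) * b / (a * b + (γ - β)) := by
  field_simp
  linear_combination kdv_shift_identity α β γ a b

end ShiftIdentities

section Compositions

variable {α β γ a b : ℂ} {t : (ℂ × ℂ) × (ℂ × ℂ) × (ℂ × ℂ)}

theorem kdvR12_denom_eq (ha : t.1.1 + t.2.1.2 = a) (hb : t.2.1.1 + t.2.2.2 = b) (ha0 : a ≠ 0) :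
    (kdvR12 α β t).1.1 + (kdvR12 α β t).2.2.2 = (a * b + (α - β)) / a := by
  simp only [kdvR12, KdVMap, ha]
  rw [add_right_comm, hb]
  field_simp

theorem kdvR23_denom_eq (ha : t.1.1 + t.2.1.2 = a) (hb : t.2.1.1 + t.2.2.2 = b) (hb0 : b ≠ 0) :
    (kdvR23 β γ t).1.1 + (kdvR23 β γ t).2.2.2 = (a * b + (γ - β)) / b := by
  simp only [kdvR23, KdVMap, hb]
  rw [← add_sub_assoc, ha]
  field_simp
  ring

theorem kdvR23_kdvR13_kdvR12 (ha : t.1.1 + t.2.1.2 = a) (hb : t.2.1.1 + t.2.2.2 = b)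
    (ha0 : a ≠ 0) (hD : a * b + (α - β) ≠ 0) :
    kdvR23 β γ (kdvR13 α γ (kdvR12 α β t)) = reverseShift t ((α - γ) * a / (a * b + (α - β)))
      ((α - β) / a + (β - γ) * (a * b + (α - β)) / (a * (a * b + (γ - β)))) := by
  have h13 : t.2.1.1 + (α - β) / a + t.2.2.2 = (a * b + (α - β)) / a := by
    rw [add_right_comm, hb]
    field_simp
  have h23 : t.1.1 + (t.2.1.2 - (α - γ) / ((a * b + (α - β)) / a))
      = a * (a * b + (γ - β)) / (a * b + (α - β)) := by
    field_simp
    linear_combination (a * b + (α - β)) * ha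
  simp only [kdvR12, kdvR13, kdvR23, KdVMap, reverseShift, ha, h13, h23, Prod.mk.injEq]
  refine ⟨⟨?_, trivial⟩, ⟨?_, ?_⟩, trivial, ?_⟩ <;> field_simp <;> ring

theorem kdvR12_kdvR13_kdvR23 (ha : t.1.1 + t.2.1.2 = a) (hb : t.2.1.1 + t.2.2.2 = b)
    (hb0 : b ≠ 0) (hE : a * b + (γ - β) ≠ 0) :
    kdvR12 α β (kdvR13 α γ (kdvR23 β γ t)) = reverseShift t
      ((β - γ) / b + (α - β) * (a * b + (γ - β)) / (b * (a * b + (α - β))))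
      ((α - γ) * b / (a * b + (γ - β))) := by
  have h13 : t.1.1 + (t.2.1.2 - (β - γ) / b) = (a * b + (γ - β)) / b := by
    rw [← add_sub_assoc, ha]
    field_simp
    ring
  have h12 : t.2.1.1 + (α - γ) / ((a * b + (γ - β)) / b) + t.2.2.2
      = b * (a * b + (α - β)) / (a * b + (γ - β)) := by
    rw [add_right_comm, hb, div_div_eq_mul_div, eq_div_iff hE, add_mul, div_mul_cancel₀ _ hE]
    ring
  simp only [kdvR12, kdvR13, kdvR23, KdVMap, reverseShift, hb, h13, h12, Prod.mk.injEq]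
  refine ⟨⟨?_, trivial⟩, ⟨?_, ?_⟩, trivial, ?_⟩ <;> field_simp <;> ring

end Compositions

theorem stmt_13_general (α β γ : ℂ) (t : (ℂ × ℂ) × (ℂ × ℂ) × (ℂ × ℂ))
    (hL1 : t.1.1 + t.2.1.2 ≠ 0)
    (hL2 : (kdvR12 α β t).1.1 + (kdvR12 α β t).2.2.2 ≠ 0)
    (hR1 : t.2.1.1 + t.2.2.2 ≠ 0)
    (hR2 : (kdvR23 β γ t).1.1 + (kdvR23 β γ t).2.2.2 ≠ 0) :
    kdvR23 β γ (kdvR13 α γ (kdvR12 α β t)) = kdvR12 α β (kdvR13 α γ (kdvR23 β γ t)) := by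
  have hD := (div_ne_zero_iff.mp (kdvR12_denom_eq (α := α) (β := β) rfl rfl hL1 ▸ hL2)).1
  have hE := (div_ne_zero_iff.mp (kdvR23_denom_eq (β := β) (γ := γ) rfl rfl hR1 ▸ hR2)).1
  rw [kdvR23_kdvR13_kdvR12 rfl rfl hL1 hD, kdvR12_kdvR13_kdvR23 rfl rfl hR1 hE,
    kdv_left_shift_eq hR1 hD, kdv_right_shift_eq hL1 hE]

theorem stmt_13 (α β γ : ℂ) (t : (ℂ × ℂ) × (ℂ × ℂ) × (ℂ × ℂ))
    (hL1 : t.1.1 + t.2.1.2 ≠ 0)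
    (hL2 : (kdvR12 α β t).1.1 + (kdvR12 α β t).2.2.2 ≠ 0)
    (hL3 : (kdvR13 α γ (kdvR12 α β t)).2.1.1 + (kdvR13 α γ (kdvR12 α β t)).2.2.2 ≠ 0)
    (hR1 : t.2.1.1 + t.2.2.2 ≠ 0)
    (hR2 : (kdvR23 β γ t).1.1 + (kdvR23 β γ t).2.2.2 ≠ 0)
    (hR3 : (kdvR13 α γ (kdvR23 β γ t)).1.1 + (kdvR13 α γ (kdvR23 β γ t)).2.1.2 ≠ 0) :
    kdvR23 β γ (kdvR13 α γ (kdvR12 α β t)) = kdvR12 α β (kdvR13 α γ (kdvR23 β γ t)) :=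
  stmt_13_general α β γ t hL1 hL2 hR1 hR2
end

section
/- The Adler–Yamilov map ((x₁,x₂),(y₁,y₂)) ↦ ((u₁,u₂),(v₁,v₂)) with u₁ = y₁ − (α−β)x₁/(1+x₁y₂), u₂ = y₂, v₁ = x₁, v₂ = x₂ + (α−β)y₂/(1+x₁y₂) admits the Lax matrix L(a₁,a₂;c) = [[a₁a₂ + c − ζ, a₁],[a₂, 1]]: for all ζ ∈ ℂ, L(u₁,u₂;α)·L(v₁,v₂;β) = L(y₁,y₂;β)·L(x₁,x₂;α). -/
open Matrix

/-- Lax matrix for the Adler–Yamilov map. -/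
noncomputable def ayLax (a₁ a₂ c ζ : ℂ) : Matrix (Fin 2) (Fin 2) ℂ :=
  !![a₁ * a₂ + c - ζ, a₁; a₂, 1]

/-! The off-diagonal entries of the two sides of the Lax equation are affine in `ζ` and
match exactly when `u₁` and `v₂` are given by the map; the `(1,1)` entry then comes for free,
since both sides have determinant `(α - ζ)(β - ζ)` and the common `(2,2)` entry `1 + x₁ y₂`
is invertible. -/

theorem Matrix.eq_of_det_eq_of_fin_two {K : Type*} [Field K] {A B : Matrix (Fin 2) (Fin 2) K}
    (h₀₁ : A 0 1 = B 0 1) (h₁₀ : A 1 0 = B 1 0) (h₁₁ : A 1 1 = B 1 1) (hA₁₁ : A 1 1 ≠ 0)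
    (hdet : A.det = B.det) : A = B := by
  have h₀₀ : A 0 0 = B 0 0 := by
    rw [det_fin_two, det_fin_two, h₀₁, h₁₀, ← h₁₁] at hdet
    exact mul_right_cancel₀ hA₁₁ (sub_left_inj.mp hdet)
  ext i j
  fin_cases i <;> fin_cases j <;> assumption

theorem det_ayLax (a₁ a₂ c ζ : ℂ) : (ayLax a₁ a₂ c ζ).det = c - ζ := by
  rw [ayLax, det_fin_two_of]
  ring

theorem ayLax_mul_ayLax (a₁ a₂ b₁ b₂ c d ζ : ℂ) :
    ayLax a₁ a₂ c ζ * ayLax b₁ b₂ d ζ =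
      !![(a₁ * a₂ + c - ζ) * (b₁ * b₂ + d - ζ) + a₁ * b₂, (a₁ * a₂ + c - ζ) * b₁ + a₁;
        a₂ * (b₁ * b₂ + d - ζ) + b₂, a₂ * b₁ + 1] := by
  rw [ayLax, ayLax, mul_fin_two]
  ring_nf

theorem stmt_14 (α β x₁ x₂ y₁ y₂ : ℂ) (h : 1 + x₁ * y₂ ≠ 0)
    (u₁ u₂ v₁ v₂ : ℂ)
    (hu₁ : u₁ = y₁ - (α - β) * x₁ / (1 + x₁ * y₂)) (hu₂ : u₂ = y₂)
    (hv₁ : v₁ = x₁) (hv₂ : v₂ = x₂ + (α - β) * y₂ / (1 + x₁ * y₂)) :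
    ∀ ζ : ℂ, ayLax u₁ u₂ α ζ * ayLax v₁ v₂ β ζ = ayLax y₁ y₂ β ζ * ayLax x₁ x₂ α ζ := by
  intro ζ
  have hu : u₁ * (1 + x₁ * y₂) = y₁ * (1 + x₁ * y₂) - (α - β) * x₁ := by
    rw [hu₁, sub_mul, div_mul_cancel₀ _ h]
  have hv : v₂ * (1 + x₁ * y₂) = x₂ * (1 + x₁ * y₂) + (α - β) * y₂ := by
    rw [hv₂, add_mul, div_mul_cancel₀ _ h]
  subst hu₂ hv₁
  apply Matrix.eq_of_det_eq_of_fin_two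
  · simp only [ayLax_mul_ayLax, of_apply, cons_val_one, cons_val_zero]
    linear_combination hu
  · simp only [ayLax_mul_ayLax, of_apply, cons_val_one, cons_val_zero]
    linear_combination hv
  · simp [ayLax_mul_ayLax]
  · simpa [ayLax_mul_ayLax, add_comm, mul_comm] using h
  · simp only [det_mul, det_ayLax]
    ring
end

section
/- The KdV-lift map ((x₁,x₂),(y₁,y₂)) ↦ ((u₁,u₂),(v₁,v₂)) with u₁ = y₁ + (α−β)/(x₁+y₂), u₂ = y₂, v₁ = x₁, v₂ = x₂ − (α−β)/(x₁+y₂) admits the Lax matrix L(a₁,a₂;c) = [[a₁, c − a₁a₂ − ζ],[−1, a₂]]: for all ζ ∈ ℂ, L(u₁,u₂;α)·L(v₁,v₂;β) = L(y₁,y₂;β)·L(x₁,x₂;α). -/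
open Matrix

/-- Lax matrix for the KdV-lift map. -/
noncomputable def kdvLax (a₁ a₂ c ζ : ℂ) : Matrix (Fin 2) (Fin 2) ℂ :=
  !![a₁, c - a₁ * a₂ - ζ; -1, a₂]

theorem stmt_15 (α β x₁ x₂ y₁ y₂ : ℂ) (h : x₁ + y₂ ≠ 0)
    (u₁ u₂ v₁ v₂ : ℂ)
    (hu₁ : u₁ = y₁ + (α - β) / (x₁ + y₂)) (hu₂ : u₂ = y₂)
    (hv₁ : v₁ = x₁) (hv₂ : v₂ = x₂ - (α - β) / (x₁ + y₂)) :
    ∀ ζ : ℂ, kdvLax u₁ u₂ α ζ * kdvLax v₁ v₂ β ζ = kdvLax y₁ y₂ β ζ * kdvLax x₁ x₂ α ζ := by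
  intro ζ
  subst hu₁ hu₂ hv₁ hv₂
  unfold kdvLax
  ext i j
  fin_cases i <;> fin_cases j <;>
    simp [Matrix.mul_apply, Fin.sum_univ_two] <;>
    field_simp <;> ring
end

section
/- The Adler–Yamilov map preserves the canonical symplectic form: with brackets {x₁,x₂}=1, {y₁,y₂}=1, {xᵢ,yⱼ}=0, the map (u₁,u₂,v₁,v₂) defined by u₁ = y₁ − (α−β)x₁/(1+x₁y₂), u₂ = y₂, v₁ = x₁, v₂ = x₂ + (α−β)y₂/(1+x₁y₂) satisfies {u₁,u₂}=1, {v₁,v₂}=1, {uᵢ,vⱼ}=0. -/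
/-- Canonical Poisson bracket on ℂ⁴ with coordinates (x₁,x₂,y₁,y₂),
    determined by {x₁,x₂} = {y₁,y₂} = 1 and all other coordinate brackets zero. -/
noncomputable def pb (f g : ℂ → ℂ → ℂ → ℂ → ℂ) (x₁ x₂ y₁ y₂ : ℂ) : ℂ :=
  (deriv (fun t => f t x₂ y₁ y₂) x₁) * (deriv (fun t => g x₁ t y₁ y₂) x₂) -
  (deriv (fun t => f x₁ t y₁ y₂) x₂) * (deriv (fun t => g t x₂ y₁ y₂) x₁) +
  (deriv (fun t => f x₁ x₂ t y₂) y₁) * (deriv (fun t => g x₁ x₂ y₁ t) y₂) -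
  (deriv (fun t => f x₁ x₂ y₁ t) y₂) * (deriv (fun t => g x₁ x₂ t y₂) y₁)

/-! Since `u₂ = y₂` and `v₁ = x₁` are coordinates and `u₁ - y₁`, `v₂ - x₂` depend on `x₁, y₂`
only, every bracket reduces to single partial derivatives; the only nontrivial one is
`{u₁, v₂} = ∂u₁/∂x₁ + ∂v₂/∂y₂`, which vanishes because `∂ₓ (c x / (1 + x y))` and
`∂_y (c y / (1 + x y))` both equal `c / (1 + x y)²`. -/

theorem hasDerivAt_mul_div_one_add_mul {𝕜 : Type*} [NontriviallyNormedField 𝕜] (c d x : 𝕜)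
    (h : 1 + x * d ≠ 0) :
    HasDerivAt (fun t => c * t / (1 + t * d)) (c / (1 + x * d) ^ 2) x := by
  have hnum : HasDerivAt (fun t => c * t) c x := by
    simpa using (hasDerivAt_id x).const_mul c
  have hden : HasDerivAt (fun t => 1 + t * d) d x := by
    simpa using ((hasDerivAt_id x).mul_const d).const_add 1
  exact (hnum.div hden h).congr_deriv (by ring)

theorem stmt_16 (α β : ℂ) (x₁ x₂ y₁ y₂ : ℂ) (h : 1 + x₁ * y₂ ≠ 0)
    (u₁f u₂f v₁f v₂f : ℂ → ℂ → ℂ → ℂ → ℂ)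
    (hu₁ : u₁f = fun a b c d => c - (α - β) * a / (1 + a * d))
    (hu₂ : u₂f = fun a b c d => d)
    (hv₁ : v₁f = fun a b c d => a)
    (hv₂ : v₂f = fun a b c d => b + (α - β) * d / (1 + a * d)) :
    pb u₁f u₂f x₁ x₂ y₁ y₂ = 1 ∧
    pb v₁f v₂f x₁ x₂ y₁ y₂ = 1 ∧
    pb u₁f v₁f x₁ x₂ y₁ y₂ = 0 ∧
    pb u₁f v₂f x₁ x₂ y₁ y₂ = 0 ∧
    pb u₂f v₁f x₁ x₂ y₁ y₂ = 0 ∧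
    pb u₂f v₂f x₁ x₂ y₁ y₂ = 0 := by
  subst hu₁ hu₂ hv₁ hv₂
  have hu₁_x₁ : deriv (fun t => y₁ - (α - β) * t / (1 + t * y₂)) x₁
      = -((α - β) / (1 + x₁ * y₂) ^ 2) :=
    ((hasDerivAt_mul_div_one_add_mul _ _ _ h).const_sub y₁).deriv
  have hv₂_y₂ : deriv (fun t => x₂ + (α - β) * t / (1 + x₁ * t)) y₂
      = (α - β) / (1 + x₁ * y₂) ^ 2 := by
    have := (hasDerivAt_mul_div_one_add_mul (α - β) x₁ y₂ (by rwa [mul_comm])).const_add x₂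
    simp only [mul_comm _ x₁] at this
    exact this.deriv
  simp only [pb, deriv_const, deriv_id'', deriv_const_add, deriv_add_const, deriv_const_sub,
    deriv_sub_const, hu₁_x₁, hv₂_y₂]
  norm_num
end
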